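/- Let f be an excursion and ε > 0. (a) If ε ∉ {Δ_t(f) : t ∈ [0,1]}, then J^ε is continuous at f with respect to the topology of uniform convergence: for every ν > 0 there is η > 0 such that every excursion g with ‖f − g‖_∞ < η satisfies ‖J^ε f − J^ε g‖_∞ ≤ ν. (b) ‖Jf − J^ε f‖_∞ → 0 as ε → 0+. -/

import Mathlib

open Set Filter Topology
open scoped Classical

noncomputable section

/-- Left limit of `f` at `t`, with the convention `f(0−) = 0`. -/
def lm (f : ℝ → ℝ) (t : ℝ) : ℝ := if t = 0 then 0 else Function.leftLim f t

/-- The jump `Δ_t(f) = f t − f(t−)`. -/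
def jump (f : ℝ → ℝ) (t : ℝ) : ℝ := f t - lm f t

/-- `inf_{[s,t]} f`. -/
def infIcc (f : ℝ → ℝ) (s t : ℝ) : ℝ := sInf (f '' Icc s t)

/-- An excursion: a càdlàg function on `[0,1]`, nonnegative, vanishing at `1` (and
extended by `0` outside `[0,1]`), all of whose jumps are nonnegative. -/
structure IsExcursion (f : ℝ → ℝ) : Prop where
  nonneg : ∀ t ∈ Icc (0:ℝ) 1, 0 ≤ f t
  zero_outside : ∀ t, t ∉ Icc (0:ℝ) 1 → f t = 0
  rightCont : ∀ t ∈ Ico (0:ℝ) 1, Tendsto f (𝓝[>] t) (𝓝 (f t))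
  leftLimEx : ∀ t ∈ Ioc (0:ℝ) 1, Tendsto f (𝓝[<] t) (𝓝 (Function.leftLim f t))
  one : f 1 = 0
  jump_nonneg : ∀ t ∈ Icc (0:ℝ) 1, 0 ≤ jump f t

/-- The genealogical relation `s ⪯_f t` : `s ≤ t` and `f(s−) ≤ inf_{[s,t]} f`. -/
def pre (f : ℝ → ℝ) (s t : ℝ) : Prop := s ≤ t ∧ lm f s ≤ infIcc f s t

/-- `x_s^t(f) = 1_{s ≤ t} · max(inf_{[s,t]} f − f(s−), 0)`. -/
def xst (f : ℝ → ℝ) (s t : ℝ) : ℝ := if s ≤ t then max (infIcc f s t - lm f s) 0 else 0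

/-- The most recent common ancestor `s ∧_f t`. -/
def mrca (f : ℝ → ℝ) (s t : ℝ) : ℝ := sSup {r : ℝ | 0 ≤ r ∧ pre f r s ∧ pre f r t}

/-- `δ_t(a,b) = min(|a−b|, Δ_t(f) − |a−b|)`, the circle pseudo-distance on `[0, Δ_t(f)]`. -/
def cdel (f : ℝ → ℝ) (t a b : ℝ) : ℝ := min |a - b| (jump f t - |a - b|)

/-- `d_O(s,t) = ∑_{s ≺_f r ⪯_f t} δ_r(0, x_r^t)`. -/
def dO (f : ℝ → ℝ) (s t : ℝ) : ℝ :=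
  ∑' r : ℝ, if pre f s r ∧ s < r ∧ pre f r t then cdel f r 0 (xst f r t) else 0

/-- `d_T(s,t) = f t − inf_{[s,t]} f − ∑_{s ≺_f r ⪯_f t} x_r^t`, intended for `s ⪯_f t`. -/
def dTanc (f : ℝ → ℝ) (s t : ℝ) : ℝ :=
  f t - infIcc f s t - ∑' r : ℝ, if pre f s r ∧ s < r ∧ pre f r t then xst f r t else 0

/-- The looptree pseudo-distance `d_L[f]`. -/
def dL (f : ℝ → ℝ) (s t : ℝ) : ℝ :=
  cdel f (mrca f s t) (xst f (mrca f s t) s) (xst f (mrca f s t) t)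
    + dO f (mrca f s t) s + dO f (mrca f s t) t

/-- The tree pseudo-distance `d_T[f]`. -/
def dT (f : ℝ → ℝ) (s t : ℝ) : ℝ := dTanc f (mrca f s t) s + dTanc f (mrca f s t) t

/-- The vernation pseudo-distance `d_V[f] = d_T[f] + 2·d_L[f]`. -/
def dV (f : ℝ → ℝ) (s t : ℝ) : ℝ := dT f s t + 2 * dL f s t

/-- `Jf(t) = ∑_{r ⪯_f t} x_r^t(f)`. -/
def Jop (f : ℝ → ℝ) (t : ℝ) : ℝ := ∑' r : ℝ, if pre f r t then xst f r t else 0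

/-- `J^ε f(t) = ∑_{r ⪯_f t, Δ_r(f) ≥ ε} x_r^t(f)`. -/
def Jeps (f : ℝ → ℝ) (ε : ℝ) (t : ℝ) : ℝ :=
  ∑' r : ℝ, if pre f r t ∧ ε ≤ jump f r then xst f r t else 0

/-- Pure jump growth (PJG) excursion: `f(t) = ∑_{r ⪯_f t} x_r^t(f)` on `[0,1]`. -/
def IsPJG (f : ℝ → ℝ) : Prop := ∀ t ∈ Icc (0:ℝ) 1, f t = Jop f t

/-- An increasing bijection from `[0,1]` onto itself. -/
def IncBij (l : ℝ → ℝ) : Prop :=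
  StrictMonoOn l (Icc (0:ℝ) 1) ∧ Set.BijOn l (Icc (0:ℝ) 1) (Icc (0:ℝ) 1)

/-- The Skorokhod distance `ρ` on functions `[0,1] → ℝ`. -/
def skor (f g : ℝ → ℝ) : ℝ :=
  sInf {c : ℝ | 0 ≤ c ∧ ∃ l : ℝ → ℝ, IncBij l ∧
    ∀ x ∈ Icc (0:ℝ) 1, |l x - x| ≤ c ∧ |f x - g (l x)| ≤ c}


/-!
For (a): `J^ε f(t)` only involves the finitely many jumps of `f` of size `≥ ε` (a càdlàg function
has finitely many large jumps). If `ε` is not itself a jump size, then, once `2‖f - g‖_∞` is below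
the distance from `ε` to the jump sizes of `f`, the excursion `g` has its jumps `≥ ε` at exactly
the same times, and each of these finitely many `x_r^t` moves by at most `2‖f - g‖_∞`.

For (b): `Jf - J^ε f` is the sum of `x_r^t` over the ancestors `r` with jump `< ε`. Over ancestors
in an interval these terms telescope, so they sum to at most the oscillation of `f` there. Near a
point `L`, split the ancestors of `t ∈ (c, u)` at some `c < L`: those in `(c, L)` and in `(L, t]`
only see the small oscillation of `f` on either side of `L` (càdlàg), `L` itself contributes at
most its jump `< ε`, and those up to `c` contribute at most the corresponding sum at `c`, which
tends to `0` as `ε → 0` by dominated convergence. Compactness of `[0,1]` makes this uniform.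
-/

theorem le_infIcc {f : ℝ → ℝ} {c s t : ℝ} (hst : s ≤ t) (h : ∀ x ∈ Icc s t, c ≤ f x) :
    c ≤ infIcc f s t :=
  le_csInf ⟨f s, s, left_mem_Icc.2 hst, rfl⟩ (by rintro _ ⟨x, hx, rfl⟩; exact h x hx)

theorem xst_nonneg (f : ℝ → ℝ) (r t : ℝ) : 0 ≤ xst f r t := by
  unfold xst
  split_ifs
  exacts [le_max_right _ _, le_rfl]

theorem xst_eq_zero_of_not_pre {f : ℝ → ℝ} {r t : ℝ} (h : ¬pre f r t) : xst f r t = 0 := by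
  unfold xst
  split_ifs with hrt
  · exact max_eq_right (by linarith [not_le.1 fun h' => h ⟨hrt, h'⟩])
  · rfl

theorem xst_eq_of_pre {f : ℝ → ℝ} {r t : ℝ} (h : pre f r t) :
    xst f r t = infIcc f r t - lm f r := by
  rw [xst, if_pos h.1, max_eq_left (sub_nonneg.2 h.2)]

/-- `∑_{r ⪯_f t, r ∈ A} x_r^t(f)`; the condition `r ⪯_f t` is automatic, since `x_r^t(f) = 0`
otherwise. -/
def jSum (f : ℝ → ℝ) (A : Set ℝ) (t : ℝ) : ℝ := ∑' r, A.indicator (fun r => xst f r t) r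

theorem Jop_eq_jSum (f : ℝ → ℝ) (t : ℝ) : Jop f t = jSum f univ t := by
  rw [Jop, jSum, indicator_univ]
  congr 1 with r
  split_ifs with h
  · rfl
  · exact (xst_eq_zero_of_not_pre h).symm

theorem Jeps_eq_jSum (f : ℝ → ℝ) (ε t : ℝ) : Jeps f ε t = jSum f {r | ε ≤ jump f r} t := by
  rw [Jeps, jSum]
  congr 1 with r
  by_cases h : pre f r t <;> by_cases hr : ε ≤ jump f r <;>
    simp [h, hr, xst_eq_zero_of_not_pre]

theorem jSum_eq_sum_of_finite (f : ℝ → ℝ) {A : Set ℝ} (hA : A.Finite) (t : ℝ) :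
    jSum f A t = ∑ r ∈ hA.toFinset, xst f r t := by
  rw [jSum, tsum_eq_sum (s := hA.toFinset) fun r hr => indicator_of_notMem (by simpa using hr) _]
  exact Finset.sum_congr rfl fun r hr => indicator_of_mem (by simpa using hr) _

theorem jSum_inter_singleton (f : ℝ → ℝ) (A : Set ℝ) (L t : ℝ) :
    jSum f (A ∩ {L}) t = A.indicator (fun r => xst f r t) L := by
  rw [jSum, tsum_eq_single L fun r hr => indicator_of_notMem (fun h => hr h.2) _]
  by_cases hL : L ∈ A
  · rw [indicator_of_mem (show L ∈ A ∩ {L} from ⟨hL, rfl⟩), indicator_of_mem hL]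
  · rw [indicator_of_notMem (show L ∉ A ∩ {L} from fun h => hL h.1), indicator_of_notMem hL]

theorem jSum_nonneg (f : ℝ → ℝ) (A : Set ℝ) (t : ℝ) : 0 ≤ jSum f A t :=
  tsum_nonneg fun r => indicator_nonneg (fun r _ => xst_nonneg f r t) r

theorem le_iff_le_of_abs_sub_lt {a b ε δ : ℝ} (hgap : δ ≤ |a - ε|) (hab : |a - b| < δ) :
    ε ≤ a ↔ ε ≤ b := by
  constructor <;> intro h <;> by_contra h' <;> cases abs_cases (a - ε) <;>
    cases abs_cases (a - b) <;> linarith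

namespace IsExcursion

variable {f g : ℝ → ℝ}

theorem apply_nonneg (hf : IsExcursion f) (t : ℝ) : 0 ≤ f t := by
  by_cases ht : t ∈ Icc (0:ℝ) 1
  · exact hf.nonneg t ht
  · rw [hf.zero_outside t ht]

theorem eventuallyEq_zero_nhdsLT (hf : IsExcursion f) {t : ℝ} (ht : t ∉ Ioc (0:ℝ) 1) :
    f =ᶠ[𝓝[<] t] 0 := by
  rcases le_or_gt t 0 with h0 | h1
  · filter_upwards [self_mem_nhdsWithin] with s (hs : s < t)
    exact hf.zero_outside s fun h => (hs.trans_le h0).not_ge h.1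
  · have h1 : 1 < t := by by_contra h; exact ht ⟨h1, not_lt.1 h⟩
    filter_upwards [Ioo_mem_nhdsLT h1] with s hs
    exact hf.zero_outside s fun h => hs.1.not_ge h.2

theorem lm_eq_zero (hf : IsExcursion f) {t : ℝ} (ht : t ∉ Ioc (0:ℝ) 1) : lm f t = 0 := by
  unfold lm
  split_ifs
  · rfl
  · exact leftLim_eq_of_tendsto (tendsto_const_nhds.congr' (hf.eventuallyEq_zero_nhdsLT ht).symm)

theorem tendsto_lm (hf : IsExcursion f) (t : ℝ) : Tendsto f (𝓝[<] t) (𝓝 (lm f t)) := by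
  by_cases ht : t ∈ Ioc (0:ℝ) 1
  · rw [lm, if_neg ht.1.ne']
    exact hf.leftLimEx t ht
  · rw [hf.lm_eq_zero ht]
    exact tendsto_const_nhds.congr' (hf.eventuallyEq_zero_nhdsLT ht).symm

theorem continuousWithinAt_Ici (hf : IsExcursion f) (t : ℝ) : ContinuousWithinAt f (Ici t) t := by
  refine continuousWithinAt_Ioi_iff_Ici.1 ?_
  by_cases ht : t ∈ Ico (0:ℝ) 1
  · exact hf.rightCont t ht
  · have hft : f t = 0 := by
      by_cases h1 : t = 1
      · rw [h1, hf.one]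
      · exact hf.zero_outside t fun h => ht ⟨h.1, lt_of_le_of_ne h.2 h1⟩
    have hzero : f =ᶠ[𝓝[>] t] 0 := by
      rcases lt_or_ge t 0 with h0 | h1
      · filter_upwards [Ioo_mem_nhdsGT h0] with s hs
        exact hf.zero_outside s fun h => hs.2.not_ge h.1
      · have h1 : 1 ≤ t := by by_contra h; exact ht ⟨h1, not_le.1 h⟩
        filter_upwards [self_mem_nhdsWithin] with s (hs : t < s)
        exact hf.zero_outside s fun h => (h1.trans_lt hs).not_ge h.2
    rw [ContinuousWithinAt, hft]
    exact tendsto_const_nhds.congr' hzero.symm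

theorem lm_mem_of_mapsTo (hf : IsExcursion f) {a s : ℝ} {S : Set ℝ} (has : a < s)
    (hS : IsClosed S) (h : MapsTo f (Ioo a s) S) : lm f s ∈ S :=
  hS.mem_of_tendsto (hf.tendsto_lm s) (mem_of_superset (Ioo_mem_nhdsLT has) h)

theorem lm_nonneg (hf : IsExcursion f) (t : ℝ) : 0 ≤ lm f t :=
  ge_of_tendsto' (hf.tendsto_lm t) hf.apply_nonneg

theorem jump_eq_zero (hf : IsExcursion f) {t : ℝ} (ht : t ∉ Icc (0:ℝ) 1) : jump f t = 0 := by
  rw [jump, hf.zero_outside t ht, hf.lm_eq_zero fun h => ht (Ioc_subset_Icc_self h), sub_zero]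

theorem jump_nonneg' (hf : IsExcursion f) (t : ℝ) : 0 ≤ jump f t := by
  by_cases ht : t ∈ Icc (0:ℝ) 1
  · exact hf.jump_nonneg t ht
  · rw [hf.jump_eq_zero ht]

theorem jump_le_of_mapsTo (hf : IsExcursion f) {a b s m M : ℝ} (hs : s ∈ Ioo a b)
    (h : MapsTo f (Ioo a b) (Icc m M)) : jump f s ≤ M - m := by
  have hlm := hf.lm_mem_of_mapsTo hs.1 isClosed_Icc (h.mono_left (Ioo_subset_Ioo_right hs.2.le))
  have := (h hs).2
  rw [jump]
  linarith [hlm.1]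

theorem exists_mapsTo_Ioo_Ico (hf : IsExcursion f) {η : ℝ} (hη : 0 < η) (L : ℝ) :
    ∃ l < L, ∃ u > L, MapsTo f (Ioo l L) (Icc (lm f L - η) (lm f L + η)) ∧
      MapsTo f (Ico L u) (Icc (f L - η) (f L + η)) := by
  obtain ⟨l, hl, hleft⟩ := mem_nhdsLT_iff_exists_Ioo_subset.1
    (hf.tendsto_lm L (Icc_mem_nhds (sub_lt_self _ hη) (lt_add_of_pos_right _ hη)))
  obtain ⟨u, hu, hright⟩ := mem_nhdsGE_iff_exists_Ico_subset.1
    (hf.continuousWithinAt_Ici L (Icc_mem_nhds (sub_lt_self _ hη) (lt_add_of_pos_right _ hη)))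
  exact ⟨l, hl, u, hu, fun x hx => hleft hx, fun x hx => hright hx⟩

theorem infIcc_le (hf : IsExcursion f) {s t x : ℝ} (hx : x ∈ Icc s t) : infIcc f s t ≤ f x :=
  csInf_le ⟨0, by rintro _ ⟨y, -, rfl⟩; exact hf.apply_nonneg y⟩ ⟨x, hx, rfl⟩

theorem infIcc_anti (hf : IsExcursion f) {s t t' : ℝ} (hst : s ≤ t) (htt' : t ≤ t') :
    infIcc f s t' ≤ infIcc f s t :=
  le_infIcc hst fun _ hx => hf.infIcc_le ⟨hx.1, hx.2.trans htt'⟩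

theorem infIcc_le_lm (hf : IsExcursion f) {a r : ℝ} (har : a < r) : infIcc f a r ≤ lm f r :=
  hf.lm_mem_of_mapsTo har isClosed_Ici fun _ hx => hf.infIcc_le (Ioo_subset_Icc_self hx)

theorem infIcc_le_infIcc_add (hf : IsExcursion f) {s t η : ℝ} (hst : s ≤ t)
    (h : ∀ x, f x ≤ g x + η) : infIcc f s t ≤ infIcc g s t + η :=
  sub_le_iff_le_add.1 <| le_infIcc hst fun x hx => by linarith [hf.infIcc_le hx, h x]

theorem xst_le_jump (hf : IsExcursion f) (r t : ℝ) : xst f r t ≤ jump f r := by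
  unfold xst
  split_ifs with hrt
  · exact max_le (by linarith [hf.infIcc_le ⟨le_rfl, hrt⟩, show jump f r = f r - lm f r from rfl])
      (hf.jump_nonneg' r)
  · exact hf.jump_nonneg' r

theorem xst_anti (hf : IsExcursion f) {r c t : ℝ} (hrc : r ≤ c) (hct : c ≤ t) :
    xst f r t ≤ xst f r c := by
  rw [xst, xst, if_pos (hrc.trans hct), if_pos hrc]
  exact max_le_max (by linarith [hf.infIcc_anti hrc hct]) le_rfl

/-- Telescoping: for the largest `b ∈ s`, `x_b^t = inf_{[b,t]} f - f(b-) ≤ M - f(b-)`, and the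
other points `r < b ≤ t` satisfy `inf_{[r,t]} f ≤ f(b-)`, so induction applies with `M := f(b-)`. -/
theorem sum_xst_le (hf : IsExcursion f) {t m M : ℝ} (hmM : m ≤ M) (s : Finset ℝ)
    (hs : ∀ r ∈ s, pre f r t ∧ infIcc f r t ≤ M ∧ m ≤ lm f r) :
    ∑ r ∈ s, xst f r t ≤ M - m := by
  induction s using Finset.induction_on_max generalizing M with
  | empty => simpa using hmM
  | insert b s hlt ih =>
    obtain ⟨hpre, hM, hm⟩ := hs b (Finset.mem_insert_self b s)
    have hrest : ∑ r ∈ s, xst f r t ≤ lm f b - m := by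
      refine ih hm fun r hr => ?_
      obtain ⟨hpre', -, hm'⟩ := hs r (Finset.mem_insert_of_mem hr)
      exact ⟨hpre', (hf.infIcc_anti (hlt r hr).le hpre.1).trans (hf.infIcc_le_lm (hlt r hr)), hm'⟩
    rw [Finset.sum_insert fun hb => (hlt b hb).false, xst_eq_of_pre hpre]
    linarith

theorem summable_xst (hf : IsExcursion f) (t : ℝ) : Summable fun r => xst f r t := by
  refine summable_of_sum_le (c := f t) (fun r => xst_nonneg f r t) fun s => ?_
  calc ∑ r ∈ s, xst f r t = ∑ r ∈ s with pre f r t, xst f r t :=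
        (Finset.sum_filter_of_ne fun r _ h => not_not.1 (mt xst_eq_zero_of_not_pre h)).symm
    _ ≤ f t - 0 := hf.sum_xst_le (hf.apply_nonneg t) _ fun r hr => by
        obtain ⟨-, hpre⟩ := Finset.mem_filter.1 hr
        exact ⟨hpre, hf.infIcc_le ⟨hpre.1, le_rfl⟩, hf.lm_nonneg r⟩
    _ = f t := sub_zero _

theorem summable_indicator_xst (hf : IsExcursion f) (A : Set ℝ) (t : ℝ) :
    Summable (A.indicator fun r => xst f r t) :=
  (hf.summable_xst t).indicator A

theorem jSum_mono (hf : IsExcursion f) {A B : Set ℝ} (hAB : A ⊆ B) (t : ℝ) :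
    jSum f A t ≤ jSum f B t :=
  (hf.summable_indicator_xst A t).tsum_le_tsum
    (indicator_le_indicator_of_subset hAB fun r => xst_nonneg f r t)
    (hf.summable_indicator_xst B t)

theorem jSum_union_le (hf : IsExcursion f) (A B : Set ℝ) (t : ℝ) :
    jSum f (A ∪ B) t ≤ jSum f A t + jSum f B t := by
  rw [jSum, jSum, jSum, ← (hf.summable_indicator_xst A t).tsum_add (hf.summable_indicator_xst B t)]
  refine (hf.summable_indicator_xst _ t).tsum_le_tsum (fun r => ?_)
    ((hf.summable_indicator_xst A t).add (hf.summable_indicator_xst B t))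
  have := congrFun (indicator_union_add_inter (fun r => xst f r t) A B) r
  simp only [Pi.add_apply] at this
  linarith [indicator_nonneg (fun r _ => xst_nonneg f r t) (s := A ∩ B) r]

theorem jSum_add_jSum_compl (hf : IsExcursion f) (A : Set ℝ) (t : ℝ) :
    jSum f A t + jSum f Aᶜ t = Jop f t := by
  rw [Jop_eq_jSum, jSum, jSum, jSum, indicator_univ,
    ← (hf.summable_indicator_xst A t).tsum_add (hf.summable_indicator_xst Aᶜ t)]
  simp only [indicator_self_add_compl_apply]

theorem Jop_sub_Jeps (hf : IsExcursion f) (ε t : ℝ) :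
    Jop f t - Jeps f ε t = jSum f {r | jump f r < ε} t := by
  rw [← hf.jSum_add_jSum_compl {r | ε ≤ jump f r}, Jeps_eq_jSum]
  simp only [compl_ofPred, not_le, add_sub_cancel_left]

theorem jSum_inter_Iic_le (hf : IsExcursion f) (A : Set ℝ) {c t : ℝ} (hct : c ≤ t) :
    jSum f (A ∩ Iic c) t ≤ jSum f A c := by
  refine (hf.summable_indicator_xst _ t).tsum_le_tsum (fun r => ?_) (hf.summable_indicator_xst A c)
  by_cases hr : r ∈ A ∩ Iic c
  · rw [indicator_of_mem hr, indicator_of_mem hr.1]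
    exact hf.xst_anti hr.2 hct
  · rw [indicator_of_notMem hr]
    exact indicator_nonneg (fun r _ => xst_nonneg f r c) r

theorem jSum_le (hf : IsExcursion f) {A : Set ℝ} {t m M : ℝ} (hmM : m ≤ M)
    (hA : ∀ r ∈ A, pre f r t → infIcc f r t ≤ M ∧ m ≤ lm f r) : jSum f A t ≤ M - m := by
  refine tsum_le_of_sum_le' (sub_nonneg.2 hmM) fun s => ?_
  calc ∑ r ∈ s, A.indicator (fun r => xst f r t) r
      = ∑ r ∈ s with r ∈ A ∧ pre f r t, xst f r t := by
        rw [Finset.sum_filter]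
        refine Finset.sum_congr rfl fun r _ => ?_
        by_cases h : pre f r t <;> by_cases hr : r ∈ A <;>
          simp [h, hr, xst_eq_zero_of_not_pre]
    _ ≤ M - m := hf.sum_xst_le hmM _ fun r hr => by
        obtain ⟨-, hrA, hpre⟩ := Finset.mem_filter.1 hr
        exact ⟨hpre, hA r hrA hpre⟩

theorem jSum_le_of_mapsTo (hf : IsExcursion f) {U A : Set ℝ} {a t m M : ℝ} (hU : U.OrdConnected)
    (ha : a ∈ U) (hfU : MapsTo f U (Icc m M)) (hA : ∀ r ∈ A, pre f r t → a < r ∧ r ∈ U) :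
    jSum f A t ≤ M - m := by
  refine hf.jSum_le ((hfU ha).1.trans (hfU ha).2) fun r hr hpre => ?_
  obtain ⟨har, hrU⟩ := hA r hr hpre
  exact ⟨(hf.infIcc_le ⟨le_rfl, hpre.1⟩).trans (hfU hrU).2,
    (hf.lm_mem_of_mapsTo har isClosed_Icc
      (hfU.mono_left (Ioo_subset_Icc_self.trans (hU.out ha hrU)))).1⟩

theorem eventually_jump_lt (hf : IsExcursion f) {c : ℝ} (hc : 0 < c) (x : ℝ) :
    ∀ᶠ s in 𝓝[≠] x, jump f s < c := by
  obtain ⟨l, hl, u, hu, hleft, hright⟩ := hf.exists_mapsTo_Ioo_Ico (by positivity : 0 < c / 3) x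
  rw [← nhdsLT_sup_nhdsGT, eventually_sup]
  constructor
  · filter_upwards [Ioo_mem_nhdsLT hl] with s hs
    linarith [hf.jump_le_of_mapsTo hs hleft]
  · filter_upwards [Ioo_mem_nhdsGT hu] with s hs
    linarith [hf.jump_le_of_mapsTo hs (hright.mono_left Ioo_subset_Ico_self)]

theorem finite_setOf_le_jump (hf : IsExcursion f) {c : ℝ} (hc : 0 < c) :
    {r | c ≤ jump f r}.Finite := by
  refine ((isCompact_Icc (a := (0:ℝ)) (b := 1)).finite_sdiff_of_mem_codiscreteWithin
    (s := {r | jump f r < c}) ?_).subset fun r (hr : c ≤ jump f r) => ⟨?_, not_lt.2 hr⟩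
  · rw [mem_codiscreteWithin_iff_forall_mem_nhdsNE]
    exact fun x _ => mem_of_superset (hf.eventually_jump_lt hc x) subset_union_left
  · by_contra h
    rw [hf.jump_eq_zero h] at hr
    exact hc.not_ge hr

theorem exists_pos_le_abs_jump_sub (hf : IsExcursion f) {ε : ℝ} (hε : 0 < ε)
    (hne : ∀ t ∈ Icc (0:ℝ) 1, jump f t ≠ ε) : ∃ δ > 0, ∀ r, δ ≤ |jump f r - ε| := by
  set S := jump f '' {r | ε / 2 ≤ jump f r}
  have hεS : ε ∉ S := by
    rintro ⟨r, -, hr⟩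
    by_cases h : r ∈ Icc (0:ℝ) 1
    · exact hne r h hr
    · exact hε.ne (hf.jump_eq_zero h ▸ hr)
  obtain ⟨δ, hδ, hball⟩ := Metric.isOpen_iff.1
    ((hf.finite_setOf_le_jump (half_pos hε)).image _).isClosed.isOpen_compl ε hεS
  refine ⟨min δ (ε / 2), lt_min hδ (half_pos hε), fun r => ?_⟩
  by_contra! h
  have hr := abs_lt.1 (h.trans_le (min_le_right _ _))
  refine hball (Metric.mem_ball.2 ?_) ⟨r, show ε / 2 ≤ jump f r by linarith, rfl⟩
  rw [Real.dist_eq]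
  exact h.trans_le (min_le_left _ _)

theorem abs_lm_sub_le (hf : IsExcursion f) (hg : IsExcursion g) {η : ℝ}
    (h : ∀ x, |f x - g x| ≤ η) (t : ℝ) : |lm f t - lm g t| ≤ η :=
  le_of_tendsto ((hf.tendsto_lm t).sub (hg.tendsto_lm t)).abs (Eventually.of_forall h)

theorem abs_jump_sub_le (hf : IsExcursion f) (hg : IsExcursion g) {η : ℝ}
    (h : ∀ x, |f x - g x| ≤ η) (t : ℝ) : |jump f t - jump g t| ≤ 2 * η := by
  rw [jump, jump, show f t - lm f t - (g t - lm g t) = (f t - g t) - (lm f t - lm g t) by ring]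
  linarith [abs_sub (f t - g t) (lm f t - lm g t), h t, hf.abs_lm_sub_le hg h t]

theorem abs_xst_sub_le (hf : IsExcursion f) (hg : IsExcursion g) {η : ℝ}
    (h : ∀ x, |f x - g x| ≤ η) (r t : ℝ) : |xst f r t - xst g r t| ≤ 2 * η := by
  have hη : 0 ≤ η := (abs_nonneg _).trans (h 0)
  unfold xst
  split_ifs with hrt
  · have hfg : ∀ x, f x ≤ g x + η := fun x => by linarith [(abs_le.1 (h x)).2]
    have hgf : ∀ x, g x ≤ f x + η := fun x => by linarith [(abs_le.1 (h x)).1]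
    have hinf : |infIcc f r t - infIcc g r t| ≤ η := abs_sub_le_iff.2
      ⟨by linarith [hf.infIcc_le_infIcc_add hrt hfg], by linarith [hg.infIcc_le_infIcc_add hrt hgf]⟩
    calc |max (infIcc f r t - lm f r) 0 - max (infIcc g r t - lm g r) 0|
        ≤ |(infIcc f r t - infIcc g r t) - (lm f r - lm g r)| :=
          (abs_max_sub_max_le_abs _ _ _).trans_eq (by ring_nf)
      _ ≤ 2 * η := by linarith [abs_sub (infIcc f r t - infIcc g r t) (lm f r - lm g r),
          hf.abs_lm_sub_le hg h r]
  · simpa using hη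

theorem exists_abs_Jeps_sub_Jeps_le (hf : IsExcursion f) {ε : ℝ} (hε : 0 < ε)
    (hne : ∀ t ∈ Icc (0:ℝ) 1, jump f t ≠ ε) :
    ∀ ν > 0, ∃ η > 0, ∀ g : ℝ → ℝ, IsExcursion g →
      (∀ t ∈ Icc (0:ℝ) 1, |f t - g t| < η) →
      ∀ t ∈ Icc (0:ℝ) 1, |Jeps f ε t - Jeps g ε t| ≤ ν := by
  intro ν hν
  obtain ⟨δ, hδ, hgap⟩ := hf.exists_pos_le_abs_jump_sub hε hne
  have hK := hf.finite_setOf_le_jump hε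
  set k : ℝ := (hK.toFinset.card : ℝ)
  refine ⟨min (δ / 4) (ν / (2 * (k + 1))), by positivity, fun g hg hclose t _ => ?_⟩
  set η := min (δ / 4) (ν / (2 * (k + 1)))
  have hfg : ∀ x, |f x - g x| ≤ η := fun x => by
    by_cases hx : x ∈ Icc (0:ℝ) 1
    · exact (hclose x hx).le
    · rw [hf.zero_outside x hx, hg.zero_outside x hx, sub_zero, abs_zero]
      positivity
  have hjumps : {r | ε ≤ jump g r} = {r | ε ≤ jump f r} := by
    ext r
    exact (le_iff_le_of_abs_sub_lt (hgap r) (by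
      linarith [hf.abs_jump_sub_le hg hfg r, min_le_left (δ / 4) (ν / (2 * (k + 1)))])).symm
  have hkη : k * (2 * η) ≤ ν := by
    have : η * (2 * (k + 1)) ≤ ν := (le_div_iff₀ (by positivity)).1 (min_le_right _ _)
    nlinarith [show 0 < η by positivity]
  calc |Jeps f ε t - Jeps g ε t| = |∑ r ∈ hK.toFinset, (xst f r t - xst g r t)| := by
        rw [Jeps_eq_jSum, Jeps_eq_jSum, hjumps, jSum_eq_sum_of_finite _ hK,
          jSum_eq_sum_of_finite _ hK, Finset.sum_sub_distrib]
    _ ≤ ∑ r ∈ hK.toFinset, |xst f r t - xst g r t| := Finset.abs_sum_le_sum_abs _ _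
    _ ≤ ∑ r ∈ hK.toFinset, 2 * η :=
        Finset.sum_le_sum fun r _ => hf.abs_xst_sub_le hg hfg r t
    _ ≤ ν := by simpa using hkη
theorem tendsto_jSum_jump_lt (hf : IsExcursion f) (t : ℝ) :
    Tendsto (fun θ => jSum f {r | jump f r < θ} t) (𝓝[>] 0) (𝓝 0) := by
  have key := tendsto_tsum_of_dominated_convergence (𝓕 := 𝓝[>] (0:ℝ)) (g := fun _ => (0:ℝ))
    (f := fun θ r => {r | jump f r < θ}.indicator (fun r => xst f r t) r) (hf.summable_xst t)
    (fun r => ?_) (Eventually.of_forall fun θ r => ?_)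
  · simpa [jSum] using key
  · refine tendsto_const_nhds.congr' ?_
    rcases (hf.jump_nonneg' r).eq_or_lt with h0 | hpos
    · refine Eventually.of_forall fun θ => (indicator_apply_eq_zero.2 fun _ => ?_).symm
      exact le_antisymm (h0 ▸ hf.xst_le_jump r t) (xst_nonneg f r t)
    · filter_upwards [nhdsWithin_le_nhds (eventually_lt_nhds hpos)] with θ hθ
      exact (indicator_of_notMem (s := {r | jump f r < θ}) (not_lt.2 hθ.le) _).symm
  · rw [Real.norm_of_nonneg (indicator_nonneg (fun r _ => xst_nonneg f r t) r)]
    exact indicator_le_self' (fun r _ => xst_nonneg f r t) r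

theorem eventually_jSum_jump_lt_le (hf : IsExcursion f) {ν : ℝ} (hν : 0 < ν) (L : ℝ) :
    ∀ᶠ p : ℝ × ℝ in 𝓝[>] 0 ×ˢ 𝓝 L, jSum f {r | jump f r < p.1} p.2 ≤ ν := by
  obtain ⟨l, hlL, u, hLu, hleft, hright⟩ := hf.exists_mapsTo_Ioo_Ico (by positivity : 0 < ν / 8) L
  obtain ⟨c, hlc, hcL⟩ := exists_between hlL
  have hsmall : ∀ᶠ θ in 𝓝[>] (0:ℝ), θ < ν / 4 ∧ jSum f {r | jump f r < θ} c < ν / 4 :=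
    ((eventually_lt_nhds (by positivity)).filter_mono nhdsWithin_le_nhds).and
      (hf.tendsto_jSum_jump_lt c (eventually_lt_nhds (by positivity)))
  filter_upwards [hsmall.prod_mk (Ioo_mem_nhds hcL hLu)] with ⟨θ, t⟩ ⟨⟨hθ, hcθ⟩, hct, htu⟩
  dsimp only at hθ hcθ hct htu ⊢
  set A := {r | jump f r < θ}
  have hsplit : A ⊆ A ∩ Iic c ∪ Ioo c L ∪ A ∩ {L} ∪ Ioi L := by
    intro r hr
    rcases le_or_gt r c with hrc | hcr
    · exact Or.inl (Or.inl (Or.inl ⟨hr, hrc⟩))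
    rcases lt_trichotomy r L with hrL | rfl | hLr
    · exact Or.inl (Or.inl (Or.inr ⟨hcr, hrL⟩))
    · exact Or.inl (Or.inr ⟨hr, rfl⟩)
    · exact Or.inr hLr
  have h1 : jSum f (A ∩ Iic c) t ≤ ν / 4 := (hf.jSum_inter_Iic_le A hct.le).trans hcθ.le
  have h2 : jSum f (Ioo c L) t ≤ ν / 4 := by
    have := hf.jSum_le_of_mapsTo (A := Ioo c L) (t := t) ordConnected_Ioo ⟨hlc, hcL⟩ hleft
      fun r hr _ => ⟨hr.1, hlc.trans hr.1, hr.2⟩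
    linarith
  have h3 : jSum f (A ∩ {L}) t ≤ ν / 4 := by
    rw [jSum_inter_singleton, indicator_apply]
    split_ifs with hL
    exacts [(hf.xst_le_jump L t).trans (hL.le.trans hθ.le), by positivity]
  have h4 : jSum f (Ioi L) t ≤ ν / 4 := by
    have := hf.jSum_le_of_mapsTo (A := Ioi L) (t := t) ordConnected_Ico (left_mem_Ico.2 hLu)
      hright fun r hr hpre => ⟨hr, hr.le, hpre.1.trans_lt htu⟩
    linarith
  calc jSum f A t ≤ jSum f (A ∩ Iic c ∪ Ioo c L ∪ A ∩ {L} ∪ Ioi L) t := hf.jSum_mono hsplit t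
    _ ≤ jSum f (A ∩ Iic c) t + jSum f (Ioo c L) t + jSum f (A ∩ {L}) t + jSum f (Ioi L) t := by
        linarith [hf.jSum_union_le (A ∩ Iic c ∪ Ioo c L ∪ A ∩ {L}) (Ioi L) t,
          hf.jSum_union_le (A ∩ Iic c ∪ Ioo c L) (A ∩ {L}) t,
          hf.jSum_union_le (A ∩ Iic c) (Ioo c L) t]
    _ ≤ ν := by linarith

theorem tendstoUniformlyOn_Jeps (hf : IsExcursion f) :
    TendstoUniformlyOn (fun ε => Jeps f ε) (Jop f) (𝓝[>] 0) (Icc 0 1) := by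
  refine Metric.tendstoUniformlyOn_iff.2 fun ν hν => ?_
  have h := (isCompact_Icc (a := (0:ℝ)) (b := 1)).mem_prod_nhdsSet_of_forall
    fun L _ => hf.eventually_jSum_jump_lt_le (half_pos hν) L
  filter_upwards [Eventually.curry h] with θ hθ t ht
  rw [Real.dist_eq, hf.Jop_sub_Jeps, abs_of_nonneg (jSum_nonneg _ _ _)]
  exact (hθ.self_of_nhdsSet t ht).trans_lt (half_lt_self hν)

end IsExcursion

theorem statement14 (f : ℝ → ℝ) (hf : IsExcursion f) (ε : ℝ) (hε : 0 < ε) :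
    ((∀ t ∈ Icc (0:ℝ) 1, jump f t ≠ ε) →
      ∀ ν > 0, ∃ η > 0, ∀ g : ℝ → ℝ, IsExcursion g →
        (∀ t ∈ Icc (0:ℝ) 1, |f t - g t| < η) →
        ∀ t ∈ Icc (0:ℝ) 1, |Jeps f ε t - Jeps g ε t| ≤ ν) ∧
    (∀ ν > 0, ∃ ε₀ > 0, ∀ ε' : ℝ, 0 < ε' → ε' ≤ ε₀ →
      ∀ t ∈ Icc (0:ℝ) 1, |Jop f t - Jeps f ε' t| ≤ ν) := by
  refine ⟨hf.exists_abs_Jeps_sub_Jeps_le hε, fun ν hν => ?_⟩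
  obtain ⟨ε₀, hε₀ : 0 < ε₀, hsub⟩ := mem_nhdsGT_iff_exists_Ioc_subset.1
    (Metric.tendstoUniformlyOn_iff.1 hf.tendstoUniformlyOn_Jeps ν hν)
  refine ⟨ε₀, hε₀, fun ε' h0 h1 t ht => ?_⟩
  rw [← Real.dist_eq]
  exact (hsub ⟨h0, h1⟩ t ht).le
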